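/- arXiv:1611.00245 — 2 statements merged into one kernel-verified Lean document; each statement's English description precedes it below -/
import Mathlib

section
/- For every natural number ℓ with ℓ = 5 or (ℓ ≥ 7 and ℓ ≠ 12), there exists a level-ℓ junior ghost datum on the theta graph. (Hence for all such levels ℓ the locus of noncanonical singularities of the moduli space of level-ℓ curves has a component of codimension 3.) -/
/-- The operation `a ⊙ m := a * m / gcd(m, ℓ)` (exact division since `gcd(m, ℓ) ∣ m`). -/
def odot (ℓ a m : ℕ) : ℕ := a * m / Nat.gcd m ℓ

/-- A level-`ℓ` junior ghost datum on the theta graph (two vertices joined by three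
edges, edges 1 and 3 oriented from the first vertex to the second, edge 2 opposite). -/
def IsJuniorGhostDatum (ℓ m₁ m₂ m₃ a₁ a₂ a₃ : ℕ) : Prop :=
  m₁ < ℓ ∧ m₂ < ℓ ∧ m₃ < ℓ ∧
  1 ≤ a₁ ∧ a₁ < ℓ ∧ 1 ≤ a₂ ∧ a₂ < ℓ ∧ 1 ≤ a₃ ∧ a₃ < ℓ ∧
  m₂ ≡ m₁ + m₃ [MOD ℓ] ∧
  Nat.gcd m₁ ℓ ∣ a₁ ∧ Nat.gcd m₂ ℓ ∣ a₂ ∧ Nat.gcd m₃ ℓ ∣ a₃ ∧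
  odot ℓ a₁ m₁ ≡ odot ℓ a₃ m₃ [MOD ℓ] ∧
  odot ℓ a₁ m₁ + odot ℓ a₂ m₂ ≡ 0 [MOD ℓ] ∧
  a₁ + a₂ + a₃ < ℓ

/-!
Every condition defining a junior ghost datum is homogeneous under multiplying the level and
all entries by the same positive factor, so a datum at level `d` yields one at every multiple
of `d`. Explicit data exist at level `8` and at every odd level `2k + 1 ≥ 5`, and the admissible
levels are exactly those divisible by `8` or by an odd number `≥ 5`: otherwise
`ℓ = 2^v · d` with `d ∈ {1, 3}` and `v ≤ 2`, i.e. `ℓ ∈ {1, 2, 3, 4, 6, 12}`.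
-/

theorem odot_mul_mul (ℓ a m d : ℕ) : odot (d * ℓ) (d * a) (d * m) = d * odot ℓ a m := by
  rcases Nat.eq_zero_or_pos d with rfl | hd
  · simp [odot]
  have hdvd : Nat.gcd m ℓ ∣ a * m := (Nat.gcd_dvd_left m ℓ).mul_left a
  rw [odot, odot, Nat.gcd_mul_left, show d * a * (d * m) = d * (d * (a * m)) by ring,
    Nat.mul_div_mul_left _ _ hd, Nat.mul_div_assoc d hdvd]

theorem IsJuniorGhostDatum.mul_left {ℓ m₁ m₂ m₃ a₁ a₂ a₃ : ℕ}
    (h : IsJuniorGhostDatum ℓ m₁ m₂ m₃ a₁ a₂ a₃) {d : ℕ} (hd : 0 < d) :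
    IsJuniorGhostDatum (d * ℓ) (d * m₁) (d * m₂) (d * m₃) (d * a₁) (d * a₂) (d * a₃) := by
  obtain ⟨hm₁, hm₂, hm₃, ha₁, ha₁ℓ, ha₂, ha₂ℓ, ha₃, ha₃ℓ, hker, hg₁, hg₂, hg₃, himg, himg',
    hage⟩ := h
  have lt {x y : ℕ} (hxy : x < y) : d * x < d * y := Nat.mul_lt_mul_of_pos_left hxy hd
  simp only [IsJuniorGhostDatum, odot_mul_mul, Nat.gcd_mul_left, ← mul_add]
  refine ⟨lt hm₁, lt hm₂, lt hm₃, Nat.mul_pos hd ha₁, lt ha₁ℓ, Nat.mul_pos hd ha₂, lt ha₂ℓ,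
    Nat.mul_pos hd ha₃, lt ha₃ℓ, hker.mul_left' d, Nat.mul_dvd_mul_left d hg₁,
    Nat.mul_dvd_mul_left d hg₂, Nat.mul_dvd_mul_left d hg₃, himg.mul_left' d, ?_, lt hage⟩
  simpa using himg'.mul_left' d

theorem exists_isJuniorGhostDatum_of_dvd {d ℓ : ℕ} (hdℓ : d ∣ ℓ) (hℓ : ℓ ≠ 0)
    (hd : ∃ m₁ m₂ m₃ a₁ a₂ a₃ : ℕ, IsJuniorGhostDatum d m₁ m₂ m₃ a₁ a₂ a₃) :
    ∃ m₁ m₂ m₃ a₁ a₂ a₃ : ℕ, IsJuniorGhostDatum ℓ m₁ m₂ m₃ a₁ a₂ a₃ := by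
  obtain ⟨c, rfl⟩ := hdℓ
  obtain ⟨m₁, m₂, m₃, a₁, a₂, a₃, hdatum⟩ := hd
  have hc : 0 < c := Nat.pos_of_ne_zero (right_ne_zero_of_mul hℓ)
  exact ⟨_, _, _, _, _, _, mul_comm c d ▸ hdatum.mul_left hc⟩

theorem isJuniorGhostDatum_odd {k : ℕ} (hk : 2 ≤ k) :
    IsJuniorGhostDatum (2 * k + 1) 1 2 1 1 k 1 := by
  have hg₂ : Nat.gcd 2 (2 * k + 1) = 1 := by simp [Nat.gcd_comm]
  have hodot₁ : odot (2 * k + 1) 1 1 = 1 := by simp [odot]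
  have hodot₂ : odot (2 * k + 1) k 2 = 2 * k := by simp [odot, mul_comm]
  refine ⟨by omega, by omega, by omega, le_rfl, by omega, by omega, by omega, le_rfl, by omega,
    rfl, by simp, by simp [hg₂], by simp, rfl, ?_, by omega⟩
  rw [hodot₁, hodot₂, add_comm, Nat.modEq_zero_iff_dvd]

theorem isJuniorGhostDatum_eight : IsJuniorGhostDatum 8 1 3 2 2 2 2 := by
  unfold IsJuniorGhostDatum
  decide

theorem exists_eight_or_odd_dvd {ℓ : ℕ} (h : ℓ = 5 ∨ (7 ≤ ℓ ∧ ℓ ≠ 12)) :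
    ∃ d, d ∣ ℓ ∧ (d = 8 ∨ ∃ k, 2 ≤ k ∧ d = 2 * k + 1) := by
  obtain ⟨v, _, ⟨k, rfl⟩, rfl⟩ := Nat.exists_eq_two_pow_mul_odd (n := ℓ) (by omega)
  by_cases hk : 2 ≤ k
  · exact ⟨2 * k + 1, dvd_mul_left _ _, .inr ⟨k, hk, rfl⟩⟩
  have hv : 3 ≤ v := by
    by_contra! hv
    interval_cases v <;> interval_cases k <;> omega
  exact ⟨8, (Nat.pow_dvd_pow 2 hv).mul_right _, .inl rfl⟩

theorem exists_junior_ghost_datum (ℓ : ℕ) (h : ℓ = 5 ∨ (7 ≤ ℓ ∧ ℓ ≠ 12)) :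
    ∃ m₁ m₂ m₃ a₁ a₂ a₃ : ℕ, IsJuniorGhostDatum ℓ m₁ m₂ m₃ a₁ a₂ a₃ := by
  have hℓ : ℓ ≠ 0 := by omega
  obtain ⟨d, hdℓ, rfl | ⟨k, hk, rfl⟩⟩ := exists_eight_or_odd_dvd h
  · exact exists_isJuniorGhostDatum_of_dvd hdℓ hℓ ⟨_, _, _, _, _, _, isJuniorGhostDatum_eight⟩
  · exact exists_isJuniorGhostDatum_of_dvd hdℓ hℓ ⟨_, _, _, _, _, _, isJuniorGhostDatum_odd hk⟩
end

section
/- For every natural number ℓ with ℓ = 5 or ℓ ≥ 7, either there exists a level-ℓ junior ghost datum on the theta graph (two vertices, three edges), or ℓ = 12 and there exists a level-12 junior ghost datum on the two-vertex graph with four edges. (Hence for every such ℓ the locus of noncanonical singularities of the moduli space of level-ℓ curves has a component of codimension 3 or 4.) -/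
/-- A level-`ℓ` junior ghost datum on the two-vertex graph with four edges
(edges 1, 3, 4 oriented from the first vertex to the second, edge 2 opposite). -/
def IsJuniorGhostDatum4 (ℓ m₁ m₂ m₃ m₄ a₁ a₂ a₃ a₄ : ℕ) : Prop :=
  m₁ < ℓ ∧ m₂ < ℓ ∧ m₃ < ℓ ∧ m₄ < ℓ ∧
  1 ≤ a₁ ∧ a₁ < ℓ ∧ 1 ≤ a₂ ∧ a₂ < ℓ ∧ 1 ≤ a₃ ∧ a₃ < ℓ ∧ 1 ≤ a₄ ∧ a₄ < ℓ ∧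
  m₂ ≡ m₁ + m₃ + m₄ [MOD ℓ] ∧
  Nat.gcd m₁ ℓ ∣ a₁ ∧ Nat.gcd m₂ ℓ ∣ a₂ ∧ Nat.gcd m₃ ℓ ∣ a₃ ∧ Nat.gcd m₄ ℓ ∣ a₄ ∧
  odot ℓ a₁ m₁ ≡ odot ℓ a₃ m₃ [MOD ℓ] ∧
  odot ℓ a₁ m₁ ≡ odot ℓ a₄ m₄ [MOD ℓ] ∧
  odot ℓ a₁ m₁ + odot ℓ a₂ m₂ ≡ 0 [MOD ℓ] ∧
  a₁ + a₂ + a₃ + a₄ < ℓ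

theorem odot_mul (k ℓ a m : ℕ) : odot (k * ℓ) (k * a) (k * m) = k * odot ℓ a m := by
  rcases Nat.eq_zero_or_pos k with rfl | hk
  · simp [odot]
  have hdvd : Nat.gcd m ℓ ∣ a * m := (Nat.gcd_dvd_left m ℓ).mul_left a
  calc odot (k * ℓ) (k * a) (k * m)
      = k * (k * (a * m)) / (k * Nat.gcd m ℓ) := by
        rw [odot, Nat.gcd_mul_left]; ring_nf
    _ = k * (a * m) / Nat.gcd m ℓ := Nat.mul_div_mul_left _ _ hk
    _ = k * odot ℓ a m := Nat.mul_div_assoc k hdvd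

namespace IsJuniorGhostDatum

theorem mul {ℓ m₁ m₂ m₃ a₁ a₂ a₃ : ℕ} (h : IsJuniorGhostDatum ℓ m₁ m₂ m₃ a₁ a₂ a₃)
    {k : ℕ} (hk : 0 < k) :
    IsJuniorGhostDatum (k * ℓ) (k * m₁) (k * m₂) (k * m₃) (k * a₁) (k * a₂) (k * a₃) := by
  obtain ⟨hm₁, hm₂, hm₃, ha₁, ha₁', ha₂, ha₂', ha₃, ha₃', hm, hg₁, hg₂, hg₃, hv₁₃, hv₁₂, hsum⟩ := h
  simp only [IsJuniorGhostDatum, Nat.gcd_mul_left, odot_mul, ← Nat.mul_add]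
  refine ⟨?_, ?_, ?_, ?_, ?_, ?_, ?_, ?_, ?_, hm.mul_left' k, Nat.mul_dvd_mul_left k hg₁,
    Nat.mul_dvd_mul_left k hg₂, Nat.mul_dvd_mul_left k hg₃, hv₁₃.mul_left' k,
    by simpa using hv₁₂.mul_left' k, ?_⟩ <;> nlinarith

theorem exists_of_dvd {d m₁ m₂ m₃ a₁ a₂ a₃ : ℕ} (h : IsJuniorGhostDatum d m₁ m₂ m₃ a₁ a₂ a₃)
    {ℓ : ℕ} (hdℓ : d ∣ ℓ) (hℓ : ℓ ≠ 0) :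
    ∃ m₁ m₂ m₃ a₁ a₂ a₃ : ℕ, IsJuniorGhostDatum ℓ m₁ m₂ m₃ a₁ a₂ a₃ := by
  obtain ⟨k, rfl⟩ := hdℓ
  rw [mul_comm]
  exact ⟨_, _, _, _, _, _, h.mul (Nat.pos_of_ne_zero (right_ne_zero_of_mul hℓ))⟩

end IsJuniorGhostDatum

theorem isJuniorGhostDatum_of_odd {d : ℕ} (hodd : Odd d) (hd : 5 ≤ d) :
    IsJuniorGhostDatum d 1 2 1 1 (d / 2) 1 := by
  have hcop : Nat.gcd 2 d = 1 := Nat.coprime_two_left.mpr hodd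
  have hd2 : d / 2 * 2 + 1 = d := Nat.div_two_mul_two_add_one_of_odd hodd
  refine ⟨by omega, by omega, by omega, le_rfl, by omega, by omega, by omega, le_rfl, by omega,
    rfl, by simp, by simp [hcop], by simp, rfl, ?_, by omega⟩
  simp only [odot, hcop, Nat.gcd_one_left, Nat.div_one, Nat.mul_one]
  rw [add_comm, hd2]
  exact Nat.modEq_zero_iff_dvd.mpr dvd_rfl

theorem isJuniorGhostDatum4_twelve : IsJuniorGhostDatum4 12 1 5 2 2 2 2 2 2 := by
  unfold IsJuniorGhostDatum4 odot; decide

theorem exists_odd_dvd_or_eight_dvd {ℓ : ℕ} (h : ℓ = 5 ∨ 7 ≤ ℓ) (h12 : ℓ ≠ 12) :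
    (∃ d, Odd d ∧ 5 ≤ d ∧ d ∣ ℓ) ∨ 8 ∣ ℓ := by
  obtain ⟨v, t, hodd, hsplit⟩ : ∃ v t, Odd t ∧ 2 ^ v * t = ℓ :=
    ⟨_, _, Nat.odd_iff.mpr <| Nat.two_dvd_ne_zero.mp <|
      Nat.not_dvd_ordCompl Nat.prime_two (by omega), Nat.ordProj_mul_ordCompl_eq_self ℓ 2⟩
  by_cases ht : 5 ≤ t
  · exact Or.inl ⟨t, hodd, ht, Dvd.intro_left _ hsplit⟩
  have hv : 3 ≤ v := by
    by_contra! hv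
    obtain ⟨j, rfl⟩ := hodd
    have hj : j ≤ 1 := by omega
    interval_cases v <;> interval_cases j <;> omega
  exact Or.inr ((pow_dvd_pow 2 hv).trans (Dvd.intro t hsplit))

theorem exists_junior_ghost_datum_three_or_four_edges (ℓ : ℕ) (h : ℓ = 5 ∨ 7 ≤ ℓ) :
    (∃ m₁ m₂ m₃ a₁ a₂ a₃ : ℕ, IsJuniorGhostDatum ℓ m₁ m₂ m₃ a₁ a₂ a₃) ∨
    (ℓ = 12 ∧ ∃ m₁ m₂ m₃ m₄ a₁ a₂ a₃ a₄ : ℕ,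
      IsJuniorGhostDatum4 12 m₁ m₂ m₃ m₄ a₁ a₂ a₃ a₄) := by
  by_cases h12 : ℓ = 12
  · exact Or.inr ⟨h12, _, _, _, _, _, _, _, _, isJuniorGhostDatum4_twelve⟩
  have hℓ : ℓ ≠ 0 := by omega
  left
  rcases exists_odd_dvd_or_eight_dvd h h12 with ⟨d, hodd, hd, hdℓ⟩ | h8
  · exact (isJuniorGhostDatum_of_odd hodd hd).exists_of_dvd hdℓ hℓ
  · exact isJuniorGhostDatum_eight.exists_of_dvd h8 hℓ
end
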